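/- Let F be a number field with ring of integers O_F, class group Cl_F, and unit group O_F^×, and n ≥ 1. With Z₁, B₁ as above (Z₁ = {(x,I) ∈ F^× ⊕ Div(F) : nI = -div(x)}, B₁ = {(x^n, -div(x))}), there is an exact sequence 0 → O_F^×/(O_F^×)^n → Z₁/B₁ → Cl_F[n] → 0; in particular |Z₁/B₁| = |O_F^×/(O_F^×)^n| · |Cl_F[n]|. -/

import Mathlib

open NumberField
open scoped nonZeroDivisors

variable (F : Type) [Field F] [NumberField F]

/-- The group `Div F` of fractional ideals of a number field `F` (written multiplicatively). -/
abbrev DivF := (FractionalIdeal (𝓞 F)⁰ F)ˣ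

/-- `div : F^× → Div F`, sending `x` to the principal fractional ideal it generates. -/
noncomputable def divF : Fˣ →* DivF F := toPrincipalIdeal (𝓞 F) F

/-- The homomorphism `(x, I) ↦ I^n ⬝ div(x)`, whose kernel is
`Z₁ = {(x, I) : I^n = div(x)⁻¹}`. -/
noncomputable def z1Hom (n : ℕ) : Fˣ × DivF F →* DivF F :=
  ((powMonoidHom n).comp (MonoidHom.snd _ _)) * ((divF F).comp (MonoidHom.fst _ _))

/-- `Z₁ = {(x, I) ∈ F^× ⊕ Div F : I^n = div(x)⁻¹}` (multiplicative notation for `nI = -div(x)`). -/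
noncomputable def Z1 (n : ℕ) : Subgroup (Fˣ × DivF F) := (z1Hom F n).ker

/-- The homomorphism `x ↦ (x^n, div(x)⁻¹)`, whose range is `B₁`. -/
noncomputable def b1Hom (n : ℕ) : Fˣ →* Fˣ × DivF F :=
  (powMonoidHom n).prod (divF F)⁻¹

/-- `B₁ = {(x^n, div(x)⁻¹) : x ∈ F^×}`. -/
noncomputable def B1 (n : ℕ) : Subgroup (Fˣ × DivF F) := (b1Hom F n).range

/-!
Sending a unit `u` to `(u, 1)` maps `O_F^×` into `Z₁`, and `(u, 1) = (x^n, div(x)⁻¹)` forces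
`div x = 1`, i.e. `x` is a unit, so the kernel modulo `B₁` is exactly `(O_F^×)^n`. The projection
`(x, I) ↦ [I]` kills `B₁`, and its image is `Cl_F[n]`: `I^n = div(x)⁻¹` is principal, and
conversely `I^n = div x` gives `(x⁻¹, I) ∈ Z₁`. If moreover `I = div y`, then `y^n x` generates
the unit ideal, so it is a unit `u`, and `(x, I) ≡ (u, 1)` modulo `B₁` via `y⁻¹`.
-/

open FractionalIdeal

section PrincipalIdeals

variable {R K : Type*} [CommRing R] [IsDomain R] [Field K] [Algebra R K] [IsFractionRing R K]

theorem toPrincipalIdeal_eq_one_iff {x : Kˣ} :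
    toPrincipalIdeal R K x = 1 ↔ x ∈ (Units.map (algebraMap R K : R →* K)).range := by
  rw [toPrincipalIdeal_eq_iff, Units.val_one, ← spanSingleton_one, eq_comm,
    spanSingleton_eq_spanSingleton]
  simp [Units.ext_iff, Units.smul_def, Algebra.smul_def]

theorem toPrincipalIdeal_unitsMap (u : Rˣ) :
    toPrincipalIdeal R K (Units.map (algebraMap R K : R →* K) u) = 1 :=
  toPrincipalIdeal_eq_one_iff.mpr ⟨u, rfl⟩

theorem ClassGroup.mk_eq_one_iff_mem_range {I : (FractionalIdeal R⁰ K)ˣ} :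
    ClassGroup.mk K I = 1 ↔ I ∈ (toPrincipalIdeal R K).range := by
  rw [ClassGroup.mk_eq_one_iff, mem_principal_ideals_iff, Submodule.isPrincipal_iff]
  simp [← coeToSubmodule_inj, eq_comm]

theorem ClassGroup.mk_toPrincipalIdeal (x : Kˣ) : ClassGroup.mk K (toPrincipalIdeal R K x) = 1 :=
  ClassGroup.mk_eq_one_iff_mem_range.mpr ⟨x, rfl⟩

end PrincipalIdeals

theorem MonoidHom.card_eq_card_mul_card_range_of_ker_eq_range {A B C : Type*} [Group A] [Group B]
    [Group C] {g : A →* B} {f : B →* C} (hg : Function.Injective g) (hfg : f.ker = g.range) :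
    Nat.card B = Nat.card A * Nat.card f.range := by
  rw [Subgroup.card_eq_card_quotient_mul_card_subgroup f.ker, mul_comm,
    Nat.card_congr (QuotientGroup.quotientKerEquivRange f).toEquiv, hfg,
    Nat.card_congr (MonoidHom.ofInjective hg).toEquiv.symm]

section Z1ModB1

variable {F} {n : ℕ}

theorem mem_Z1_iff {z : Fˣ × DivF F} : z ∈ Z1 F n ↔ z.2 ^ n * divF F z.1 = 1 := Iff.rfl

theorem b1Hom_apply (x : Fˣ) : b1Hom F n x = (x ^ n, (divF F x)⁻¹) := rfl

variable (F n)

theorem B1_le_Z1 : B1 F n ≤ Z1 F n := by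
  rintro _ ⟨x, rfl⟩
  simp [mem_Z1_iff, b1Hom_apply]

noncomputable def unitsToZ1 : (𝓞 F)ˣ →* Z1 F n :=
  ((Units.map (algebraMap (𝓞 F) F : 𝓞 F →* F)).prod 1).codRestrict _ fun u => by
    simp [mem_Z1_iff, divF, toPrincipalIdeal_unitsMap]

@[simp]
theorem coe_unitsToZ1 (u : (𝓞 F)ˣ) :
    (unitsToZ1 F n u : Fˣ × DivF F) = (Units.map (algebraMap (𝓞 F) F : 𝓞 F →* F) u, 1) := rfl

abbrev Z1ModB1 : Type := Z1 F n ⧸ (B1 F n).subgroupOf (Z1 F n)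

variable {F n}

theorem unitsToZ1_mem_B1_iff {u : (𝓞 F)ˣ} :
    (unitsToZ1 F n u : Fˣ × DivF F) ∈ B1 F n ↔ u ∈ (powMonoidHom n).range := by
  constructor
  · rintro ⟨x, hx⟩
    obtain ⟨hxu, hdiv⟩ := Prod.ext_iff.mp hx
    obtain ⟨v, rfl⟩ := toPrincipalIdeal_eq_one_iff.mp (inv_eq_one.mp hdiv)
    refine ⟨v, Units.map_injective (IsFractionRing.injective (𝓞 F) F) ?_⟩
    simpa [b1Hom_apply] using hxu
  · rintro ⟨v, rfl⟩
    refine ⟨Units.map (algebraMap (𝓞 F) F : 𝓞 F →* F) v, ?_⟩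
    rw [b1Hom_apply, divF, toPrincipalIdeal_unitsMap, inv_one, coe_unitsToZ1, powMonoidHom_apply,
      map_pow]

theorem exists_unitsToZ1_inv_mul_mem_B1 {z : Z1 F n}
    (hz : ClassGroup.mk F (z : Fˣ × DivF F).2 = 1) :
    ∃ u, (unitsToZ1 F n u)⁻¹ * z ∈ (B1 F n).subgroupOf (Z1 F n) := by
  obtain ⟨⟨x, I⟩, hxI⟩ := z
  obtain ⟨y, rfl⟩ := ClassGroup.mk_eq_one_iff_mem_range.mp hz
  have hyx : toPrincipalIdeal (𝓞 F) F (y ^ n * x) = 1 := by simpa [mem_Z1_iff, divF] using hxI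
  obtain ⟨u, hu⟩ := toPrincipalIdeal_eq_one_iff.mp hyx
  refine ⟨u, Subgroup.mem_subgroupOf.mpr ⟨y⁻¹, Prod.ext ?_ ?_⟩⟩
  · simp [b1Hom_apply, hu]
  · simp [b1Hom_apply, divF]

theorem classGroup_mk_pow_eq_one {z : Fˣ × DivF F} (hz : z ∈ Z1 F n) :
    ClassGroup.mk F z.2 ^ n = 1 := by
  have hpow : z.2 ^ n = (divF F z.1)⁻¹ := eq_inv_of_mul_eq_one_left hz
  rw [← map_pow, hpow, map_inv, divF, ClassGroup.mk_toPrincipalIdeal, inv_one]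

theorem exists_classGroup_mk_eq_of_pow_eq_one {c : ClassGroup (𝓞 F)} (hc : c ^ n = 1) :
    ∃ z ∈ Z1 F n, ClassGroup.mk F z.2 = c := by
  induction c using ClassGroup.induction (R := 𝓞 F) F with
  | h I =>
    rw [← map_pow, ClassGroup.mk_eq_one_iff_mem_range] at hc
    obtain ⟨x, hx⟩ := hc
    refine ⟨(x⁻¹, I), ?_, rfl⟩
    simp [mem_Z1_iff, divF, hx]

variable (F n)

noncomputable def Z1ModB1.ofUnits : (𝓞 F)ˣ ⧸ (powMonoidHom n).range →* Z1ModB1 F n :=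
  QuotientGroup.lift _ ((QuotientGroup.mk' _).comp (unitsToZ1 F n)) fun u hu => by
    simpa [QuotientGroup.eq_one_iff, Subgroup.mem_subgroupOf] using unitsToZ1_mem_B1_iff.mpr hu

noncomputable def Z1ModB1.toClassGroup : Z1ModB1 F n →* ClassGroup (𝓞 F) :=
  QuotientGroup.lift _ ((ClassGroup.mk F).comp ((MonoidHom.snd _ _).comp (Z1 F n).subtype))
    fun z ⟨x, hx⟩ => by
      change ClassGroup.mk F (z : Fˣ × DivF F).2 = 1
      simp [← show b1Hom F n x = z from hx, b1Hom_apply, divF, ClassGroup.mk_toPrincipalIdeal]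

theorem Z1ModB1.injective_ofUnits : Function.Injective (Z1ModB1.ofUnits F n) := by
  rw [Z1ModB1.ofUnits, QuotientGroup.injective_lift_iff]
  ext u
  rw [MonoidHom.mem_ker, MonoidHom.comp_apply, QuotientGroup.mk'_apply, QuotientGroup.eq_one_iff,
    Subgroup.mem_subgroupOf, unitsToZ1_mem_B1_iff]

theorem Z1ModB1.toClassGroup_mk (z : Z1 F n) :
    Z1ModB1.toClassGroup F n z = ClassGroup.mk F (z : Fˣ × DivF F).2 := rfl

variable {F n}

theorem Z1ModB1.mem_range_toClassGroup {c : ClassGroup (𝓞 F)} :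
    c ∈ (Z1ModB1.toClassGroup F n).range ↔ c ^ n = 1 := by
  constructor
  · rintro ⟨w, rfl⟩
    induction w using QuotientGroup.induction_on with
    | H z => exact classGroup_mk_pow_eq_one z.2
  · intro hc
    obtain ⟨z, hz, rfl⟩ := exists_classGroup_mk_eq_of_pow_eq_one hc
    exact ⟨(⟨z, hz⟩ : Z1 F n), rfl⟩

variable (F n)

theorem Z1ModB1.ker_toClassGroup :
    (Z1ModB1.toClassGroup F n).ker = (Z1ModB1.ofUnits F n).range := by
  refine le_antisymm (fun w hw => ?_) ?_
  · induction w using QuotientGroup.induction_on with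
    | H z =>
      obtain ⟨u, hu⟩ := exists_unitsToZ1_inv_mul_mem_B1 hw
      exact ⟨u, QuotientGroup.eq.mpr hu⟩
  · rintro _ ⟨q, rfl⟩
    induction q using QuotientGroup.induction_on with
    | H u => exact (Z1ModB1.toClassGroup F n).map_one

end Z1ModB1

theorem stmt_15 (n : ℕ) :
    B1 F n ≤ Z1 F n ∧
    ∃ (g : ((𝓞 F)ˣ ⧸ (powMonoidHom n : (𝓞 F)ˣ →* (𝓞 F)ˣ).range) →*
        (Z1 F n ⧸ (B1 F n).subgroupOf (Z1 F n)))
      (f : (Z1 F n ⧸ (B1 F n).subgroupOf (Z1 F n)) →* ClassGroup (𝓞 F)),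
      Function.Injective g ∧
      (∀ z : Z1 F n, f (QuotientGroup.mk z) = ClassGroup.mk F z.val.2) ∧
      (∀ w, (f w) ^ n = 1) ∧
      (∀ c : ClassGroup (𝓞 F), c ^ n = 1 → ∃ w, f w = c) ∧
      f.ker = g.range ∧
      Nat.card (Z1 F n ⧸ (B1 F n).subgroupOf (Z1 F n)) =
        Nat.card ((𝓞 F)ˣ ⧸ (powMonoidHom n : (𝓞 F)ˣ →* (𝓞 F)ˣ).range) *
          Nat.card {c : ClassGroup (𝓞 F) // c ^ n = 1} := by
  refine ⟨B1_le_Z1 F n, Z1ModB1.ofUnits F n, Z1ModB1.toClassGroup F n,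
    Z1ModB1.injective_ofUnits F n, Z1ModB1.toClassGroup_mk F n,
    fun w => Z1ModB1.mem_range_toClassGroup.mp ⟨w, rfl⟩,
    fun c hc => Z1ModB1.mem_range_toClassGroup.mpr hc, Z1ModB1.ker_toClassGroup F n, ?_⟩
  rw [MonoidHom.card_eq_card_mul_card_range_of_ker_eq_range (Z1ModB1.injective_ofUnits F n)
    (Z1ModB1.ker_toClassGroup F n)]
  exact congrArg _ (Nat.card_congr (Equiv.subtypeEquivRight fun _ =>
    Z1ModB1.mem_range_toClassGroup))
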